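/- Under the stated hypotheses, the oblique residual r₂ = b − Y q₂ satisfies Kᵀ r₂ = 0 and ‖r₂‖₂² = ‖r₁‖₂² + ‖Ω⁻¹ ((I − Y Yᵀ) K Ψ)ᵀ b‖₂², where r₁ = (I − Y Yᵀ) b is the orthogonal-projection residual. In particular ‖r₂‖₂ ≥ ‖r₁‖₂. -/
import Mathlib


open Matrix

/-- The Euclidean norm of a vector, ‖v‖₂ = √(v ⬝ᵥ v). -/
noncomputable def norm2 {n : ℕ} (v : Fin n → ℝ) : ℝ := Real.sqrt (v ⬝ᵥ v)

private lemma dot_self_nonneg {n : ℕ} (v : Fin n → ℝ) : 0 ≤ v ⬝ᵥ v :=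
  Finset.sum_nonneg fun i _ => mul_self_nonneg (v i)

/-- The oblique residual r₂ = b − Yq₂ satisfies Kᵀr₂ = 0 and
‖r₂‖₂² = ‖r₁‖₂² + ‖Ω⁻¹((I−YYᵀ)KΨ)ᵀ b‖₂², where r₁ = (I−YYᵀ)b; in particular
‖r₂‖₂ ≥ ‖r₁‖₂. -/
theorem stmt_17 (N n : ℕ) (hN : 0 < N) (hn : 0 < n) (hnN : n ≤ N)
    (K Y : Matrix (Fin N) (Fin n) ℝ) (hKK : Kᵀ * K = 1) (hYY : Yᵀ * Y = 1)
    (b : Fin N → ℝ)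
    (Φ Ψ : Matrix (Fin n) (Fin n) ℝ) (ω : Fin n → ℝ)
    (hΦ : Φᵀ * Φ = 1) (hΦ' : Φ * Φᵀ = 1) (hΨ : Ψᵀ * Ψ = 1) (hΨ' : Ψ * Ψᵀ = 1)
    (hSVD : Yᵀ * K = Φ * Matrix.diagonal ω * Ψᵀ) (hω : ∀ j, ω j ≠ 0) :
    Kᵀ *ᵥ (b - Y *ᵥ ((Kᵀ * Y)⁻¹ *ᵥ (Kᵀ *ᵥ b))) = 0 ∧
      (b - Y *ᵥ ((Kᵀ * Y)⁻¹ *ᵥ (Kᵀ *ᵥ b))) ⬝ᵥ (b - Y *ᵥ ((Kᵀ * Y)⁻¹ *ᵥ (Kᵀ *ᵥ b)))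
        = ((1 - Y * Yᵀ) *ᵥ b) ⬝ᵥ ((1 - Y * Yᵀ) *ᵥ b)
          + ((Matrix.diagonal ω)⁻¹ *ᵥ (((1 - Y * Yᵀ) * K * Ψ)ᵀ *ᵥ b)) ⬝ᵥ
            ((Matrix.diagonal ω)⁻¹ *ᵥ (((1 - Y * Yᵀ) * K * Ψ)ᵀ *ᵥ b)) ∧
      norm2 ((1 - Y * Yᵀ) *ᵥ b) ≤ norm2 (b - Y *ᵥ ((Kᵀ * Y)⁻¹ *ᵥ (Kᵀ *ᵥ b))) := by
  set D := Matrix.diagonal ω with hDdef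
  set D' := Matrix.diagonal (fun j => (ω j)⁻¹) with hD'def
  have hDD' : D * D' = 1 := by
    rw [hDdef, hD'def, Matrix.diagonal_mul_diagonal]
    have : (fun j => ω j * (ω j)⁻¹) = fun _ => (1:ℝ) := by
      funext j; exact mul_inv_cancel₀ (hω j)
    rw [this, Matrix.diagonal_one]
  have hD'D : D' * D = 1 := by
    rw [hDdef, hD'def, Matrix.diagonal_mul_diagonal]
    have : (fun j => (ω j)⁻¹ * ω j) = fun _ => (1:ℝ) := by
      funext j; exact inv_mul_cancel₀ (hω j)
    rw [this, Matrix.diagonal_one]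
  have hDinv : D⁻¹ = D' := Matrix.inv_eq_right_inv hDD'
  have hDT : Dᵀ = D := by rw [hDdef]; exact Matrix.diagonal_transpose ω
  have hM : Kᵀ * Y = Ψ * D * Φᵀ := by
    have := congrArg Matrix.transpose hSVD
    simpa [Matrix.transpose_mul, hDT, Matrix.mul_assoc] using this
  set W := Φ * D' * Ψᵀ with hWdef
  have hMW : (Kᵀ * Y) * W = 1 := by
    rw [hM, hWdef]
    calc Ψ * D * Φᵀ * (Φ * D' * Ψᵀ) = Ψ * (D * ((Φᵀ * Φ) * (D' * Ψᵀ))) := by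
          simp only [Matrix.mul_assoc]
      _ = Ψ * (D * D' * Ψᵀ) := by rw [hΦ, Matrix.one_mul, Matrix.mul_assoc]
      _ = 1 := by rw [hDD', Matrix.one_mul, hΨ']
  have hWM : W * (Kᵀ * Y) = 1 := by
    rw [hM, hWdef]
    calc Φ * D' * Ψᵀ * (Ψ * D * Φᵀ) = Φ * (D' * ((Ψᵀ * Ψ) * (D * Φᵀ))) := by
          simp only [Matrix.mul_assoc]
      _ = Φ * (D' * D * Φᵀ) := by rw [hΨ, Matrix.one_mul, Matrix.mul_assoc]
      _ = 1 := by rw [hD'D, Matrix.one_mul, hΦ']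
  have hMinv : (Kᵀ * Y)⁻¹ = W := Matrix.inv_eq_right_inv hMW
  -- vectors
  set r1 : Fin N → ℝ := (1 - Y * Yᵀ) *ᵥ b with hr1def
  set s : Fin n → ℝ := (Yᵀ - W * Kᵀ) *ᵥ b with hsdef
  set t : Fin n → ℝ := (Matrix.diagonal ω)⁻¹ *ᵥ (((1 - Y * Yᵀ) * K * Ψ)ᵀ *ᵥ b) with htdef
  have hr2 : b - Y *ᵥ ((Kᵀ * Y)⁻¹ *ᵥ (Kᵀ *ᵥ b)) = r1 + Y *ᵥ s := by
    rw [hMinv, hr1def, hsdef]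
    simp only [Matrix.mulVec_mulVec, Matrix.sub_mulVec, Matrix.one_mulVec,
      Matrix.mulVec_sub, ← Matrix.mul_assoc]
    abel
  -- t as a matrix applied to b
  have ht : t = (D' * (Ψᵀ * (Kᵀ * (1 - Y * Yᵀ)))) *ᵥ b := by
    rw [htdef, ← hDdef, hDinv]
    have htr : ((1 - Y * Yᵀ) * K * Ψ)ᵀ = Ψᵀ * (Kᵀ * (1 - Y * Yᵀ)) := by
      have hP : (1 - Y * Yᵀ)ᵀ = 1 - Y * Yᵀ := by
        simp [Matrix.transpose_sub, Matrix.transpose_mul]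
      rw [Matrix.transpose_mul, Matrix.transpose_mul, hP]
    rw [htr, Matrix.mulVec_mulVec]
  have hst : s = -(Φ *ᵥ t) := by
    rw [hsdef, ht, Matrix.mulVec_mulVec]
    have hmat : Yᵀ - W * Kᵀ = -(Φ * (D' * (Ψᵀ * (Kᵀ * (1 - Y * Yᵀ))))) := by
      have h1 : Φ * (D' * (Ψᵀ * (Kᵀ * (1 - Y * Yᵀ)))) = W * Kᵀ - W * (Kᵀ * Y) * Yᵀ := by
        simp only [Matrix.mul_sub, Matrix.sub_mul, Matrix.mul_one, hWdef, Matrix.mul_assoc]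
      rw [h1, hWM, Matrix.one_mul]; abel
    rw [hmat, Matrix.neg_mulVec]
  -- first claim
  have claim1 : Kᵀ *ᵥ (b - Y *ᵥ ((Kᵀ * Y)⁻¹ *ᵥ (Kᵀ *ᵥ b))) = 0 := by
    rw [hMinv, Matrix.mulVec_sub, Matrix.mulVec_mulVec, Matrix.mulVec_mulVec, hMW,
      Matrix.one_mulVec, sub_self]
  -- orthogonality: Yᵀ r1 = 0
  have hYr1 : Yᵀ *ᵥ r1 = 0 := by
    rw [hr1def, Matrix.mulVec_mulVec]
    have : Yᵀ * (1 - Y * Yᵀ) = 0 := by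
      rw [Matrix.mul_sub, Matrix.mul_one, ← Matrix.mul_assoc, hYY, Matrix.one_mul, sub_self]
    rw [this, Matrix.zero_mulVec]
  have horth : r1 ⬝ᵥ (Y *ᵥ s) = 0 := by
    rw [Matrix.dotProduct_mulVec, ← Matrix.mulVec_transpose, hYr1, zero_dotProduct]
  have hYs : (Y *ᵥ s) ⬝ᵥ (Y *ᵥ s) = s ⬝ᵥ s := by
    rw [Matrix.dotProduct_mulVec, ← Matrix.mulVec_transpose, Matrix.mulVec_mulVec, hYY,
      Matrix.one_mulVec]
  have hss : s ⬝ᵥ s = t ⬝ᵥ t := by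
    rw [hst, neg_dotProduct, dotProduct_neg, neg_neg,
      Matrix.dotProduct_mulVec, ← Matrix.mulVec_transpose, Matrix.mulVec_mulVec, hΦ,
      Matrix.one_mulVec]
  have claim2 : (b - Y *ᵥ ((Kᵀ * Y)⁻¹ *ᵥ (Kᵀ *ᵥ b))) ⬝ᵥ (b - Y *ᵥ ((Kᵀ * Y)⁻¹ *ᵥ (Kᵀ *ᵥ b)))
      = r1 ⬝ᵥ r1 + t ⬝ᵥ t := by
    rw [hr2, add_dotProduct, dotProduct_add, dotProduct_add, horth,
      dotProduct_comm (Y *ᵥ s) r1, horth, hYs, hss]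
    ring
  refine ⟨claim1, claim2, ?_⟩
  unfold norm2
  apply Real.sqrt_le_sqrt
  rw [claim2]
  have := dot_self_nonneg t
  linarith
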